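/- arXiv:2005.05762 — 3 statements merged into one kernel-verified Lean document; each statement's English description precedes it below -/
import Mathlib

section
/- Let q be a real number with q > 160·36⁵. Then no real number δ in the closed interval [q²+18q, (2/3)q³-7q²] satisfies (δ+q)(q³-4q²)(q²+q+1) ≤ q⁷ + 10q⁶ + δ(4q⁴ + (3/2)δ(q²+q)). -/
set_option maxHeartbeats 1000000 in
/-- For real `q > 160·36⁵`, no `δ` in the interval `[q²+18q, (2/3)q³-7q²]` satisfies
`(δ+q)(q³-4q²)(q²+q+1) ≤ q⁷ + 10q⁶ + δ(4q⁴ + (3/2)δ(q²+q))`. -/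
theorem stmt15 (q δ : ℝ) (hq : q > 160 * 36^5)
    (h1 : q^2 + 18 * q ≤ δ) (h2 : δ ≤ (2/3) * q^3 - 7 * q^2) :
    ¬ ((δ + q) * (q^3 - 4 * q^2) * (q^2 + q + 1)
        ≤ q^7 + 10 * q^6 + δ * (4 * q^4 + (3/2) * δ * (q^2 + q))) := by
  push_neg
  have hq0 : (0:ℝ) < q := by nlinarith
  have hq400 : (400:ℝ) < q := by nlinarith
  have h3 : (0:ℝ) < q^3 := by positivity
  have fa : q^7 + 10*q^6 + (q^2+18*q) * (4*q^4 + (3/2)*(q^2+18*q)*(q^2+q))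
      - ((q^2+18*q) + q) * (q^3 - 4*q^2) * (q^2+q+1) < 0 := by
    nlinarith [mul_pos (mul_pos h3 h3) hq0, mul_pos h3 h3, mul_pos h3 (mul_pos hq0 hq0),
      mul_pos h3 hq0, mul_pos (sub_pos.2 hq400) (mul_pos h3 (mul_pos hq0 hq0))]
  have fb : q^7 + 10*q^6 + ((2/3)*q^3-7*q^2) * (4*q^4 + (3/2)*((2/3)*q^3-7*q^2)*(q^2+q))
      - (((2/3)*q^3-7*q^2) + q) * (q^3 - 4*q^2) * (q^2+q+1) < 0 := by
    nlinarith [mul_pos (mul_pos h3 h3) hq0, mul_pos (mul_pos h3 h3) (mul_pos hq0 hq0),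
      mul_pos h3 h3, mul_pos h3 (mul_pos hq0 hq0), mul_pos h3 hq0,
      mul_pos (sub_pos.2 hq400) (mul_pos (mul_pos h3 h3) hq0),
      mul_pos (sub_pos.2 hq400) (mul_pos h3 (mul_pos hq0 hq0))]
  set a := q^2 + 18*q with ha
  set b := (2/3)*q^3 - 7*q^2 with hb
  clear_value a b
  have hba : (0:ℝ) < b - a := by rw [ha, hb]; nlinarith
  set Fd := q^7 + 10 * q^6 + δ * (4 * q^4 + (3/2) * δ * (q^2 + q))
      - (δ + q) * (q^3 - 4 * q^2) * (q^2 + q + 1) with hFd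
  clear_value Fd
  have key : (b - a) * Fd
      = (b - δ) * (q^7 + 10*q^6 + a * (4*q^4 + (3/2)*a*(q^2+q)) - (a + q) * (q^3 - 4*q^2) * (q^2+q+1))
      + (δ - a) * (q^7 + 10*q^6 + b * (4*q^4 + (3/2)*b*(q^2+q)) - (b + q) * (q^3 - 4*q^2) * (q^2+q+1))
      - (3/2) * (q^2+q) * (δ - a) * (b - δ) * (b - a) := by
    rw [hFd, ha, hb]; ring
  have hqq : (0:ℝ) ≤ q^2 + q := by positivity
  have t1 : (b - δ) * (q^7 + 10*q^6 + a * (4*q^4 + (3/2)*a*(q^2+q)) - (a + q) * (q^3 - 4*q^2) * (q^2+q+1))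
      + (δ - a) * (q^7 + 10*q^6 + b * (4*q^4 + (3/2)*b*(q^2+q)) - (b + q) * (q^3 - 4*q^2) * (q^2+q+1)) < 0 := by
    rcases le_or_gt δ ((a+b)/2) with hm | hm
    · have hbd : (0:ℝ) < b - δ := by linarith
      have t := mul_neg_of_pos_of_neg hbd fa
      have t' := mul_nonpos_of_nonneg_of_nonpos (sub_nonneg.2 h1) fb.le
      linarith
    · have had : (0:ℝ) < δ - a := by linarith
      have t := mul_neg_of_pos_of_neg had fb
      have t' := mul_nonpos_of_nonneg_of_nonpos (sub_nonneg.2 h2) fa.le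
      linarith
  have t3 : (0:ℝ) ≤ (3/2) * (q^2+q) * (δ - a) * (b - δ) * (b - a) := by
    have : (0:ℝ) ≤ δ - a := by linarith
    have h4 : (0:ℝ) ≤ b - δ := by linarith
    positivity
  have hFdneg : (b - a) * Fd < 0 := by rw [key]; linarith
  have hFneg : Fd < 0 := by
    by_contra h
    push_neg at h
    exact absurd (mul_nonneg hba.le h) (not_le.2 hFdneg)
  rw [hFd] at hFneg
  linarith
end

section
/- Let q ≥ 2, θ₂ = q²+q+1, θ₃ = q³+q²+q+1, and let B be a finite set with |B| ≤ θ₃ - q - δ, and w : B → ℕ a function with w(b) ≤ q + 1 + δ for all b ∈ B (here δ ≥ 0 an integer). Suppose moreover that either w(b) ≤ q + (δ+1)/2 for all b, or there is b₀ with w(b₀) = q + x, x ≥ (δ+1)/2, w(b) ≤ q+1+δ-x for all b in B \ B₀ and |B₀| ≤ θ₂ - q - x for a distinguished subset B₀ containing b₀ on which w ≤ q + x. Then Σ_{b∈B}(w(b) - q) ≤ (1/2)(θ₃ - q - δ)(δ + 1). -/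
/-- Abstract form of the estimate (eqnsumestimate): with `θ₂ = q²+q+1`,
`θ₃ = q³+q²+q+1`, a finite set `B` with `|B| ≤ θ₃ - q - δ`, and `w : B → ℕ` with
`w(b) ≤ q + 1 + δ`, if either `w(b) ≤ q + (δ+1)/2` for all `b`, or there are
`b₀ ∈ B₀ ⊆ B` and `x` with `w(b₀) = q + x`, `x ≥ (δ+1)/2`, `w ≤ q+1+δ-x` off `B₀`,
`w ≤ q + x` on `B₀` and `|B₀| ≤ θ₂ - q - x`, then
`Σ_{b ∈ B} (w(b) - q) ≤ (1/2)(θ₃ - q - δ)(δ + 1)`. -/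
theorem stmt17 {β : Type*} (q δ : ℕ) (hq : 2 ≤ q)
    (B : Finset β) (w : β → ℕ)
    (hB : (B.card : ℚ) ≤ (q^3 + q^2 + q + 1) - q - δ)
    (hw : ∀ b ∈ B, w b ≤ q + 1 + δ)
    (hcase :
      (∀ b ∈ B, (w b : ℚ) ≤ q + (δ + 1) / 2) ∨
      (∃ b₀ ∈ B, ∃ x : ℕ, ∃ B₀ ⊆ B, b₀ ∈ B₀ ∧
        w b₀ = q + x ∧ ((δ : ℚ) + 1) / 2 ≤ x ∧
        (∀ b ∈ B, b ∉ B₀ → (w b : ℚ) ≤ q + 1 + δ - x) ∧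
        (∀ b ∈ B₀, w b ≤ q + x) ∧
        (B₀.card : ℚ) ≤ (q^2 + q + 1) - q - x)) :
    ∑ b ∈ B, ((w b : ℚ) - q) ≤ (1/2) * ((q^3 + q^2 + q + 1) - q - δ) * (δ + 1) := by
  have hq2 : (2:ℚ) ≤ q := by exact_mod_cast hq
  have hcard0 : (0:ℚ) ≤ (B.card : ℚ) := by positivity
  classical
  rcases hcase with h | ⟨b₀, hb₀B, x, B₀, hsub, hb₀, hwb₀, hx, hoff, hon, hB₀⟩
  · have h1 : ∑ b ∈ B, ((w b : ℚ) - q) ≤ (B.card : ℚ) * ((δ + 1) / 2) := by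
      calc ∑ b ∈ B, ((w b : ℚ) - q) ≤ ∑ _b ∈ B, ((δ:ℚ) + 1) / 2 := by
            apply Finset.sum_le_sum
            intro b hb
            have := h b hb
            linarith
        _ = (B.card : ℚ) * ((δ + 1) / 2) := by
            rw [Finset.sum_const, nsmul_eq_mul]
    nlinarith [h1]
  · have hxn : x ≤ 1 + δ := by
      have h1 := hw b₀ hb₀B
      rw [hwb₀] at h1
      omega
    have hxδ : (x:ℚ) ≤ δ + 1 := by
      have h' : (x:ℚ) ≤ ((1 + δ : ℕ) : ℚ) := Nat.cast_le.2 hxn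
      push_cast at h'
      linarith
    have hc0 : (B₀.card : ℚ) ≤ (B.card : ℚ) := by
      exact_mod_cast Finset.card_le_card hsub
    have hc00 : (0:ℚ) ≤ (B₀.card : ℚ) := by positivity
    have hsplit : ∑ b ∈ B \ B₀, ((w b : ℚ) - q) + ∑ b ∈ B₀, ((w b : ℚ) - q)
        = ∑ b ∈ B, ((w b : ℚ) - q) := Finset.sum_sdiff hsub
    have hsum0 : ∑ b ∈ B₀, ((w b : ℚ) - q) ≤ (B₀.card : ℚ) * x := by
      calc ∑ b ∈ B₀, ((w b : ℚ) - q) ≤ ∑ _b ∈ B₀, (x:ℚ) := by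
            apply Finset.sum_le_sum
            intro b hb
            have := hon b hb
            have : (w b : ℚ) ≤ q + x := by exact_mod_cast this
            linarith
        _ = (B₀.card : ℚ) * x := by rw [Finset.sum_const, nsmul_eq_mul]
    have hsumoff : ∑ b ∈ B \ B₀, ((w b : ℚ) - q)
        ≤ ((B.card : ℚ) - B₀.card) * (1 + δ - x) := by
      have hcard : ((B \ B₀).card : ℚ) = (B.card : ℚ) - B₀.card := by
        rw [Finset.card_sdiff_of_subset hsub]
        have := Finset.card_le_card hsub
        push_cast [Nat.cast_sub this]
        ring
      calc ∑ b ∈ B \ B₀, ((w b : ℚ) - q) ≤ ∑ _b ∈ B \ B₀, ((1:ℚ) + δ - x) := by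
            apply Finset.sum_le_sum
            intro b hb
            rw [Finset.mem_sdiff] at hb
            have := hoff b hb.1 hb.2
            linarith
        _ = ((B.card : ℚ) - B₀.card) * (1 + δ - x) := by
            rw [Finset.sum_const, nsmul_eq_mul, hcard]
    have hξ : (0:ℚ) ≤ 2 * x - δ - 1 := by linarith
    have hq3 : (q:ℚ)^2 ≤ (q:ℚ)^3 := by nlinarith
    nlinarith [mul_nonneg hξ (sub_nonneg.2 hq3),
      mul_le_mul_of_nonneg_right hB₀ hξ,
      mul_le_mul_of_nonneg_right hB (by linarith : (0:ℚ) ≤ 1 + (δ:ℚ) - x),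
      mul_le_mul_of_nonneg_right hc0 (by linarith : (0:ℚ) ≤ 1 + (δ:ℚ) - x)]
end

section
/- Let V = GF(q)⁵ and let (P, ℓ) be a pair with P a 1-dimensional and ℓ a 2-dimensional subspace, P ⊆ ℓ. Define 𝓕(P,ℓ) as the set of all flags (h, π) of type {2,3} (dim h = 2, dim π = 3, h ⊆ π) such that P ⊆ h or ℓ ⊆ π. Then 𝓕(P,ℓ) is an independent set of the Kneser graph qK₅;{2,3}: no two of its members are in general position. -/
open Module

lemma stmt19_key {K : Type*} [Field K] {V : Type*} [AddCommGroup V] [Module K V]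
    [FiniteDimensional K V] (hV : finrank K V = 5)
    (W α β : Submodule K V) (hW : W ≤ α ⊓ β) (hWd : 0 < finrank K W)
    (hd : finrank K α + finrank K β < 5 + finrank K W) :
    α ⊓ β ≠ ⊥ ∧ α ⊔ β ≠ ⊤ := by
  have hinf : finrank K W ≤ finrank K ↥(α ⊓ β) := Submodule.finrank_mono hW
  constructor
  · intro h
    rw [h] at hinf
    rw [show finrank K (↥(⊥ : Submodule K V)) = 0 from finrank_bot K V] at hinf
    omega
  · intro h
    have := Submodule.finrank_sup_add_finrank_inf_eq α β
    rw [h] at this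
    rw [finrank_top, hV] at this
    omega

/-- In `V = GF(q)⁵`, let `P ≤ ℓ` with `dim P = 1`, `dim ℓ = 2`. Any two flags
`(h₁,π₁)`, `(h₂,π₂)` of type `{2,3}` belonging to
`𝓕(P,ℓ) = {(h,π) : P ≤ h or ℓ ≤ π}` are not in general position. -/
theorem stmt19 (p n : ℕ) [Fact p.Prime] [Fact (0 < n)]
    (P ℓ : Submodule (GaloisField p n) (Fin 5 → GaloisField p n))
    (hP : Module.finrank (GaloisField p n) P = 1)
    (hℓ : Module.finrank (GaloisField p n) ℓ = 2)
    (hPℓ : P ≤ ℓ)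
    (h₁ π₁ h₂ π₂ : Submodule (GaloisField p n) (Fin 5 → GaloisField p n))
    (hh₁ : Module.finrank (GaloisField p n) h₁ = 2)
    (hπ₁d : Module.finrank (GaloisField p n) π₁ = 3)
    (hh₂ : Module.finrank (GaloisField p n) h₂ = 2)
    (hπ₂d : Module.finrank (GaloisField p n) π₂ = 3)
    (hf₁ : h₁ ≤ π₁) (hf₂ : h₂ ≤ π₂)
    (hm₁ : P ≤ h₁ ∨ ℓ ≤ π₁) (hm₂ : P ≤ h₂ ∨ ℓ ≤ π₂) :
    ∃ α ∈ ({h₁, π₁} : Set (Submodule (GaloisField p n) (Fin 5 → GaloisField p n))),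
      ∃ β ∈ ({h₂, π₂} : Set (Submodule (GaloisField p n) (Fin 5 → GaloisField p n))),
        α ⊓ β ≠ ⊥ ∧ α ⊔ β ≠ ⊤ := by
  have hV : finrank (GaloisField p n) (Fin 5 → GaloisField p n) = 5 := by
    simp [Module.finrank_fin_fun]
  rcases hm₁ with hm₁ | hm₁ <;> rcases hm₂ with hm₂ | hm₂
  · exact ⟨h₁, by simp, h₂, by simp,
      stmt19_key hV P h₁ h₂ (le_inf hm₁ hm₂) (by omega) (by omega)⟩
  · exact ⟨h₁, by simp, π₂, by simp,
      stmt19_key hV P h₁ π₂ (le_inf hm₁ (hPℓ.trans hm₂)) (by omega) (by omega)⟩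
  · exact ⟨π₁, by simp, h₂, by simp,
      stmt19_key hV P π₁ h₂ (le_inf ((hPℓ.trans hm₁)) hm₂) (by omega) (by omega)⟩
  · exact ⟨π₁, by simp, π₂, by simp,
      stmt19_key hV ℓ π₁ π₂ (le_inf hm₁ hm₂) (by omega) (by omega)⟩
end
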